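/- arXiv:1303.4009 — 3 statements merged into one kernel-verified Lean document; each statement's English description precedes it below -/
import Mathlib

section
/- Consistency of the discrete time derivative with the tangent update: let E be a real inner product space, m, v ∈ E with ‖m‖ = 1 and ⟪m, v⟫ = 0, and k > 0. Then ‖ (1/k)·((m + k v)/‖m + k v‖ − m) − v ‖ ≤ (k/2)‖v‖². -/
open scoped RealInnerProductSpace

/-- Consistency of the discrete time derivative with the tangent update:
for `m, v` in a real inner product space with `‖m‖ = 1` and `⟪m, v⟫ = 0`, and
`k > 0`, there holds
`‖(1/k)·((m + k v)/‖m + k v‖ − m) − v‖ ≤ (k/2)‖v‖²`. -/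
theorem discrete_time_derivative_consistency {E : Type*} [NormedAddCommGroup E]
    [InnerProductSpace ℝ E] (m v : E) (hm : ‖m‖ = 1) (hmv : ⟪m, v⟫ = 0)
    (k : ℝ) (hk : 0 < k) :
    ‖(1 / k) • (‖m + k • v‖⁻¹ • (m + k • v) - m) - v‖ ≤ k / 2 * ‖v‖ ^ 2 := by
  have hk' : k ≠ 0 := hk.ne'
  set a := m + k • v with ha
  have hn2 : ‖a‖ ^ 2 = 1 + k ^ 2 * ‖v‖ ^ 2 := by
    rw [ha, norm_add_sq_real, hm, inner_smul_right, hmv, norm_smul,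
      Real.norm_eq_abs, abs_of_pos hk]
    ring
  have hn1 : 1 ≤ ‖a‖ := by nlinarith [norm_nonneg a, sq_nonneg (k * ‖v‖)]
  have hnpos : (0:ℝ) < ‖a‖ := lt_of_lt_of_le one_pos hn1
  have key : (1 / k) • (‖a‖⁻¹ • a - m) - v = ((1 / k) * (‖a‖⁻¹ - 1)) • a := by
    have hme : m = a - k • v := by rw [ha]; abel
    rw [hme]
    match_scalars <;> (field_simp; try ring)
  rw [key, norm_smul, Real.norm_eq_abs]
  have habs : |1 / k * (‖a‖⁻¹ - 1)| = (1 / k) * (1 - ‖a‖⁻¹) := by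
    rw [abs_mul, abs_of_pos (by positivity), abs_of_nonpos (by
      simp only [sub_nonpos]
      exact inv_le_one_of_one_le₀ hn1)]
    ring
  rw [habs]
  have hinv : (1 - ‖a‖⁻¹) * ‖a‖ = ‖a‖ - 1 := by field_simp
  have hbound : ‖a‖ - 1 ≤ k ^ 2 * ‖v‖ ^ 2 / 2 := by nlinarith
  calc 1 / k * (1 - ‖a‖⁻¹) * ‖a‖ = (‖a‖ - 1) / k := by
        rw [mul_assoc, hinv]; ring
    _ ≤ (k ^ 2 * ‖v‖ ^ 2 / 2) / k := by gcongr
    _ = k / 2 * ‖v‖ ^ 2 := by field_simp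
end

section
/- Integral version of the consistency estimate: let (X, μ) be a measure space, let m, v : X → ℝ³ be measurable with |m(x)| = 1 and m(x)·v(x) = 0 for μ-almost every x, and let k > 0. Then ∫_X | (1/k)·((m(x) + k v(x))/|m(x) + k v(x)| − m(x)) − v(x) | dμ(x) ≤ (k/2) ∫_X |v(x)|² dμ(x). -/
/-!
Put `w = m + k v`. Since `m ⊥ v` and `|m| = 1`, Pythagoras gives `|w|² = 1 + k²|v|²`, so `|w| ≥ 1`.
The defect `(1/k)(w/|w| − m) − v` equals `(1/k)(w/|w| − w)`, of length `(|w| − 1)/k`, and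
`|w| − 1 ≤ (|w|² − 1)/2 = k²|v|²/2` because `(|w| − 1)² ≥ 0`. Integrating this pointwise bound
gives the theorem.
-/

open MeasureTheory
open scoped RealInnerProductSpace ENNReal

section InnerProductSpace

variable {E : Type*} [NormedAddCommGroup E] [InnerProductSpace ℝ E]

theorem norm_inv_norm_smul_sub_self {w : E} (hw : 1 ≤ ‖w‖) :
    ‖‖w‖⁻¹ • w - w‖ = ‖w‖ - 1 := by
  have hw0 : ‖w‖ ≠ 0 := (one_pos.trans_le hw).ne'
  have hfactor : ‖w‖⁻¹ • w - w = (‖w‖⁻¹ - 1) • w := by rw [sub_smul, one_smul]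
  rw [hfactor, norm_smul, Real.norm_eq_abs, abs_of_nonpos, neg_sub, sub_mul,
    inv_mul_cancel₀ hw0, one_mul]
  exact sub_nonpos.2 (inv_le_one_of_one_le₀ hw)

theorem norm_add_smul_sq_of_inner_eq_zero {m v : E} (hm : ‖m‖ = 1) (hmv : ⟪m, v⟫ = 0) (k : ℝ) :
    ‖m + k • v‖ ^ 2 = 1 + k ^ 2 * ‖v‖ ^ 2 := by
  rw [norm_add_sq_real, real_inner_smul_right, hmv, norm_smul, hm, Real.norm_eq_abs,
    mul_pow, sq_abs]
  ring

theorem norm_normalize_sub_div_sub_le {m v : E} (hm : ‖m‖ = 1) (hmv : ⟪m, v⟫ = 0) {k : ℝ}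
    (hk : 0 < k) :
    ‖(1 / k) • (‖m + k • v‖⁻¹ • (m + k • v) - m) - v‖ ≤ k / 2 * ‖v‖ ^ 2 := by
  obtain ⟨w, hw⟩ : ∃ w, w = m + k • v := ⟨_, rfl⟩
  rw [← hw]
  have hw_sq : ‖w‖ ^ 2 = 1 + k ^ 2 * ‖v‖ ^ 2 := hw ▸ norm_add_smul_sq_of_inner_eq_zero hm hmv k
  have hw_one : 1 ≤ ‖w‖ := by nlinarith [norm_nonneg w, sq_nonneg (k * ‖v‖)]
  have hdefect : (1 / k) • (‖w‖⁻¹ • w - m) - v = (1 / k) • (‖w‖⁻¹ • w - w) := by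
    have hkv : (1 / k) • (k • v) = v := by rw [smul_smul, one_div_mul_cancel hk.ne', one_smul]
    generalize ‖w‖⁻¹ • w = a
    rw [hw, smul_sub, smul_sub, smul_add, hkv]
    abel
  rw [hdefect, norm_smul, norm_inv_norm_smul_sub_self hw_one, Real.norm_eq_abs,
    abs_of_pos (one_div_pos.2 hk), one_div_mul_eq_div, div_le_iff₀ hk]
  nlinarith [sq_nonneg (‖w‖ - 1)]

end InnerProductSpace

theorem integral_consistency_estimate_general {X : Type*} [MeasurableSpace X]
    (μ : Measure X) (m v : X → EuclideanSpace ℝ (Fin 3))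
    (hm1 : ∀ᵐ x ∂μ, ‖m x‖ = 1) (hmv : ∀ᵐ x ∂μ, ⟪m x, v x⟫ = 0)
    (k : ℝ) (hk : 0 < k) :
    ∫⁻ x, (‖(1 / k) • (‖m x + k • v x‖⁻¹ • (m x + k • v x) - m x) - v x‖₊ :
        ℝ≥0∞) ∂μ ≤
      ENNReal.ofReal (k / 2) * ∫⁻ x, (‖v x‖₊ : ℝ≥0∞) ^ 2 ∂μ := by
  rw [← lintegral_const_mul' _ _ ENNReal.ofReal_ne_top]
  refine lintegral_mono_ae ?_
  filter_upwards [hm1, hmv] with x hm1x hmvx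
  rw [← enorm_eq_nnnorm, ← enorm_eq_nnnorm, ← ofReal_norm, ← ofReal_norm,
    ← ENNReal.ofReal_pow (norm_nonneg _), ← ENNReal.ofReal_mul (by positivity)]
  exact ENNReal.ofReal_le_ofReal (norm_normalize_sub_div_sub_le hm1x hmvx hk)

/-- Integral version of the consistency estimate (Lemma 5.5): for measurable
`m, v : X → ℝ³` with `|m(x)| = 1` and `m(x)·v(x) = 0` for `μ`-a.e. `x`, and
`k > 0`,
`∫ |(1/k)((m + k v)/|m + k v| − m) − v| dμ ≤ (k/2) ∫ |v|² dμ`. -/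
theorem integral_consistency_estimate {X : Type*} [MeasurableSpace X]
    (μ : Measure X) (m v : X → EuclideanSpace ℝ (Fin 3))
    (hm : Measurable m) (hv : Measurable v)
    (hm1 : ∀ᵐ x ∂μ, ‖m x‖ = 1) (hmv : ∀ᵐ x ∂μ, ⟪m x, v x⟫ = 0)
    (k : ℝ) (hk : 0 < k) :
    ∫⁻ x, (‖(1 / k) • (‖m x + k • v x‖⁻¹ • (m x + k • v x) - m x) - v x‖₊ :
        ℝ≥0∞) ∂μ ≤
      ENNReal.ofReal (k / 2) * ∫⁻ x, (‖v x‖₊ : ℝ≥0∞) ^ 2 ∂μ :=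
  integral_consistency_estimate_general μ m v hm1 hmv k hk
end

section
/- Unique solvability of the coupled Maxwell-LLG timestep (abstract form of Lemma 4.1): let K, X, Y, W be finite-dimensional real inner product spaces; let S : K → K be linear with ⟪Su, u⟫ = 0 for all u ∈ K; let G : K → W and T : X → Y be linear; let R : K → Y be linear with ‖Ru‖ ≤ ‖u‖ for all u ∈ K; let P : X → X be linear, self-adjoint and positive semidefinite; and let α, μ₀, ε₀, k > 0, β ≥ 0, σ ≥ 0. Then there exists c > 0 such that the bilinear form a on K × X × Y defined by a((Φ,Ψ,Θ),(φ,ψ,ζ)) = αμ₀⟪Φ,φ⟫ + μ₀⟪SΦ,φ⟫ + μ₀βk⟪GΦ,Gφ⟫ − (μ₀/2)⟪RΦ,ζ⟫ + (cε₀/k)⟪Ψ,ψ⟫ − (c/2)⟪Θ,Tψ⟫ + (cσ/2)⟪PΨ,ψ⟫ + (cμ₀/k)⟪Θ,ζ⟫ + (c/2)⟪TΨ,ζ⟫ + cμ₀⟪Θ,Rφ⟫ satisfies a((Φ,Ψ,Θ),(Φ,Ψ,Θ)) > 0 for all (Φ,Ψ,Θ) ≠ 0; consequently, for every linear functional L on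 K × X × Y there exists a unique (Φ,Ψ,Θ) ∈ K × X × Y with a((Φ,Ψ,Θ),(φ,ψ,ζ)) = L((φ,ψ,ζ)) for all (φ,ψ,ζ) ∈ K × X × Y. -/
open scoped RealInnerProductSpace

/-- Unique solvability of the coupled Maxwell-LLG timestep (abstract form of
Lemma 4.1): for finite-dimensional real inner product spaces `K, X, Y, W`,
linear maps `S : K → K` with `⟪S u, u⟫ = 0`, `G : K → W`, `T : X → Y`,
`R : K → Y` with `‖R u‖ ≤ ‖u‖`, a self-adjoint positive semidefinite
`P : X → X`, and constants `α, μ₀, ε₀, k > 0`, `β ≥ 0`, `σ ≥ 0`, there exists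
`c > 0` such that the bilinear form
`a((Φ,Ψ,Θ),(φ,ψ,ζ)) = αμ₀⟪Φ,φ⟫ + μ₀⟪SΦ,φ⟫ + μ₀βk⟪GΦ,Gφ⟫ − (μ₀/2)⟪RΦ,ζ⟫
 + (cε₀/k)⟪Ψ,ψ⟫ − (c/2)⟪Θ,Tψ⟫ + (cσ/2)⟪PΨ,ψ⟫ + (cμ₀/k)⟪Θ,ζ⟫ + (c/2)⟪TΨ,ζ⟫
 + cμ₀⟪Θ,Rφ⟫`
is positive definite on the diagonal; consequently every linear functional `L`
on `K × X × Y` admits a unique `(Φ,Ψ,Θ)` with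
`a((Φ,Ψ,Θ),(φ,ψ,ζ)) = L (φ,ψ,ζ)` for all test functions. -/
theorem coupled_timestep_unique_solvability {K X Y W : Type*}
    [NormedAddCommGroup K] [InnerProductSpace ℝ K] [FiniteDimensional ℝ K]
    [NormedAddCommGroup X] [InnerProductSpace ℝ X] [FiniteDimensional ℝ X]
    [NormedAddCommGroup Y] [InnerProductSpace ℝ Y] [FiniteDimensional ℝ Y]
    [NormedAddCommGroup W] [InnerProductSpace ℝ W] [FiniteDimensional ℝ W]
    (S : K →ₗ[ℝ] K) (hS : ∀ u : K, ⟪S u, u⟫ = 0)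
    (G : K →ₗ[ℝ] W) (T : X →ₗ[ℝ] Y)
    (R : K →ₗ[ℝ] Y) (hR : ∀ u : K, ‖R u‖ ≤ ‖u‖)
    (P : X →ₗ[ℝ] X) (hPsa : ∀ u v : X, ⟪P u, v⟫ = ⟪u, P v⟫)
    (hPpos : ∀ u : X, 0 ≤ ⟪P u, u⟫)
    (α μ₀ ε₀ k : ℝ) (hα : 0 < α) (hμ : 0 < μ₀) (hε : 0 < ε₀) (hk : 0 < k)
    (β σ : ℝ) (hβ : 0 ≤ β) (hσ : 0 ≤ σ) :
    ∃ c > (0 : ℝ),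
      (∀ Φ : K, ∀ Ψ : X, ∀ Θ : Y, (Φ, Ψ, Θ) ≠ (0 : K × X × Y) →
        0 < α * μ₀ * ⟪Φ, Φ⟫ + μ₀ * ⟪S Φ, Φ⟫ + μ₀ * β * k * ⟪G Φ, G Φ⟫
              - μ₀ / 2 * ⟪R Φ, Θ⟫
            + c * ε₀ / k * ⟪Ψ, Ψ⟫ - c / 2 * ⟪Θ, T Ψ⟫ + c * σ / 2 * ⟪P Ψ, Ψ⟫
            + c * μ₀ / k * ⟪Θ, Θ⟫ + c / 2 * ⟪T Ψ, Θ⟫ + c * μ₀ * ⟪Θ, R Φ⟫) ∧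
      (∀ L : K × X × Y →ₗ[ℝ] ℝ, ∃! u : K × X × Y,
        ∀ φ : K, ∀ ψ : X, ∀ ζ : Y,
          α * μ₀ * ⟪u.1, φ⟫ + μ₀ * ⟪S u.1, φ⟫ + μ₀ * β * k * ⟪G u.1, G φ⟫
              - μ₀ / 2 * ⟪R u.1, ζ⟫
            + c * ε₀ / k * ⟪u.2.1, ψ⟫ - c / 2 * ⟪u.2.2, T ψ⟫
            + c * σ / 2 * ⟪P u.2.1, ψ⟫ + c * μ₀ / k * ⟪u.2.2, ζ⟫
            + c / 2 * ⟪T u.2.1, ζ⟫ + c * μ₀ * ⟪u.2.2, R φ⟫ = L (φ, ψ, ζ)) := by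
  refine ⟨1/2, by norm_num, ?_⟩
  set c : ℝ := 1/2 with hc
  -- the bilinear form
  set B : (K × X × Y) →ₗ[ℝ] (K × X × Y) →ₗ[ℝ] ℝ :=
    LinearMap.mk₂ ℝ (fun u v =>
      α * μ₀ * ⟪u.1, v.1⟫ + μ₀ * ⟪S u.1, v.1⟫ + μ₀ * β * k * ⟪G u.1, G v.1⟫
          - μ₀ / 2 * ⟪R u.1, v.2.2⟫
        + c * ε₀ / k * ⟪u.2.1, v.2.1⟫ - c / 2 * ⟪u.2.2, T v.2.1⟫
        + c * σ / 2 * ⟪P u.2.1, v.2.1⟫ + c * μ₀ / k * ⟪u.2.2, v.2.2⟫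
        + c / 2 * ⟪T u.2.1, v.2.2⟫ + c * μ₀ * ⟪u.2.2, R v.1⟫)
      (by intro u u' v; simp [inner_add_left, inner_add_right]; ring)
      (by intro r u v; simp [inner_smul_left, inner_smul_right]; ring)
      (by intro u v v'; simp [inner_add_left, inner_add_right]; ring)
      (by intro r u v; simp [inner_smul_left, inner_smul_right]; ring) with hB
  have hpos : ∀ u : K × X × Y, u ≠ 0 → 0 < B u u := by
    rintro ⟨Φ, Ψ, Θ⟩ hu
    have hdiag : B (Φ, Ψ, Θ) (Φ, Ψ, Θ) =
        α * μ₀ * ⟪Φ, Φ⟫ + μ₀ * β * k * ⟪G Φ, G Φ⟫ + c * ε₀ / k * ⟪Ψ, Ψ⟫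
          + c * σ / 2 * ⟪P Ψ, Ψ⟫ + c * μ₀ / k * ⟪Θ, Θ⟫ := by
      simp only [hB, LinearMap.mk₂_apply]
      rw [real_inner_comm (R Φ) Θ, real_inner_comm (T Ψ) Θ, hS]
      ring
    rw [hdiag]
    have h1 : (0:ℝ) ≤ α * μ₀ * ⟪Φ, Φ⟫ :=
      mul_nonneg (mul_nonneg hα.le hμ.le) (real_inner_self_nonneg)
    have h2 : (0:ℝ) ≤ μ₀ * β * k * ⟪G Φ, G Φ⟫ :=
      mul_nonneg (mul_nonneg (mul_nonneg hμ.le hβ) hk.le) (real_inner_self_nonneg)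
    have h3 : (0:ℝ) ≤ c * ε₀ / k * ⟪Ψ, Ψ⟫ :=
      mul_nonneg (div_nonneg (mul_nonneg (by norm_num) hε.le) hk.le)
        (real_inner_self_nonneg)
    have h4 : (0:ℝ) ≤ c * σ / 2 * ⟪P Ψ, Ψ⟫ :=
      mul_nonneg (div_nonneg (mul_nonneg (by norm_num) hσ) (by norm_num)) (hPpos Ψ)
    have h5 : (0:ℝ) ≤ c * μ₀ / k * ⟪Θ, Θ⟫ :=
      mul_nonneg (div_nonneg (mul_nonneg (by norm_num) hμ.le) hk.le)
        (real_inner_self_nonneg)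
    have hne : Φ ≠ 0 ∨ Ψ ≠ 0 ∨ Θ ≠ 0 := by
      by_contra hcon
      push_neg at hcon
      exact hu (by simp [Prod.ext_iff, hcon.1, hcon.2.1, hcon.2.2])
    rcases hne with h | h | h
    · have hip : (0:ℝ) < ⟪Φ, Φ⟫ := by
        rw [real_inner_self_eq_norm_sq]; exact pow_pos (norm_pos_iff.mpr h) 2
      have : (0:ℝ) < α * μ₀ * ⟪Φ, Φ⟫ := mul_pos (mul_pos hα hμ) hip
      linarith
    · have hip : (0:ℝ) < ⟪Ψ, Ψ⟫ := by
        rw [real_inner_self_eq_norm_sq]; exact pow_pos (norm_pos_iff.mpr h) 2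
      have : (0:ℝ) < c * ε₀ / k * ⟪Ψ, Ψ⟫ :=
        mul_pos (div_pos (mul_pos (by norm_num) hε) hk) hip
      linarith
    · have hip : (0:ℝ) < ⟪Θ, Θ⟫ := by
        rw [real_inner_self_eq_norm_sq]; exact pow_pos (norm_pos_iff.mpr h) 2
      have : (0:ℝ) < c * μ₀ / k * ⟪Θ, Θ⟫ :=
        mul_pos (div_pos (mul_pos (by norm_num) hμ) hk) hip
      linarith
  constructor
  · intro Φ Ψ Θ hu
    have := hpos (Φ, Ψ, Θ) hu
    simpa [hB, LinearMap.mk₂_apply] using this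
  · intro L
    have hinj : Function.Injective B := by
      rw [← LinearMap.ker_eq_bot, LinearMap.ker_eq_bot']
      intro u hBu
      by_contra h
      have := hpos u h
      rw [hBu] at this
      simp at this
    have hsurj : Function.Surjective B := by
      refine (LinearMap.injective_iff_surjective_of_finrank_eq_finrank ?_).mp hinj
      rw [Module.finrank_linearMap, Module.finrank_self, mul_one]
    obtain ⟨u, hu⟩ := hsurj L
    refine ⟨u, ?_, ?_⟩
    · intro φ ψ ζ
      have := LinearMap.congr_fun hu (φ, ψ, ζ)
      simpa [hB, LinearMap.mk₂_apply] using this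
    · intro v hv
      have hBv : B v = L := by
        refine LinearMap.ext ?_
        rintro ⟨φ, ψ, ζ⟩
        simpa [hB, LinearMap.mk₂_apply] using hv φ ψ ζ
      exact hinj (hBv.trans hu.symm)
end
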